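/- (Equivalence of the reduced-space and bi-reduced-space 3D-Var solutions.) Let F be an invertible real M×M matrix, R a symmetric positive definite real M×M matrix, H a real M×n matrix, V a real n×S matrix, and d ∈ ℝ^M. Define V_l = F H V, R_l = F R Fᵀ, and d_l = F d. Then the two assimilation solutions coincide: (I + V_lᵀ R_l⁻¹ V_l)⁻¹ V_lᵀ R_l⁻¹ d_l = (I + Vᵀ Hᵀ R⁻¹ H V)⁻¹ Vᵀ Hᵀ R⁻¹ d, i.e. w_l^DA = w^DA. -/
import Mathlib


open Matrix

/-- (Equivalence of the reduced-space and bi-reduced-space 3D-Var solutions.) With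
`V_l = F H V`, `R_l = F R Fᵀ` and `d_l = F d` for invertible `F` and symmetric positive
definite `R`, the two assimilation solutions coincide:
`(I + V_lᵀ R_l⁻¹ V_l)⁻¹ V_lᵀ R_l⁻¹ d_l = (I + Vᵀ Hᵀ R⁻¹ H V)⁻¹ Vᵀ Hᵀ R⁻¹ d`. -/
theorem wlDA_eq_wDA {n M S : ℕ} (F : Matrix (Fin M) (Fin M) ℝ) (hF : IsUnit F.det)
    (R : Matrix (Fin M) (Fin M) ℝ) (hR : R.PosDef)
    (H : Matrix (Fin M) (Fin n) ℝ) (V : Matrix (Fin n) (Fin S) ℝ) (d : Fin M → ℝ) :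
    (1 + (F * H * V)ᵀ * (F * R * Fᵀ)⁻¹ * (F * H * V))⁻¹.mulVec
        (((F * H * V)ᵀ * (F * R * Fᵀ)⁻¹).mulVec (F.mulVec d)) =
      (1 + Vᵀ * Hᵀ * R⁻¹ * H * V)⁻¹.mulVec ((Vᵀ * Hᵀ * R⁻¹).mulVec d) := by
  have hFT : IsUnit Fᵀ.det := by rwa [Matrix.det_transpose]
  have key : (F * H * V)ᵀ * (F * R * Fᵀ)⁻¹ = Vᵀ * Hᵀ * R⁻¹ * F⁻¹ := by
    rw [Matrix.mul_inv_rev, Matrix.mul_inv_rev]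
    simp only [Matrix.transpose_mul, ← Matrix.mul_assoc]
    rw [Matrix.mul_nonsing_inv_cancel_right _ _ hFT]
  have key2 : (F * H * V)ᵀ * (F * R * Fᵀ)⁻¹ * (F * H * V) = Vᵀ * Hᵀ * R⁻¹ * H * V := by
    rw [key]
    simp only [← Matrix.mul_assoc]
    rw [Matrix.nonsing_inv_mul_cancel_right _ _ hF]
  rw [key2, key, Matrix.mulVec_mulVec, Matrix.mulVec_mulVec, Matrix.mul_assoc _ _ F,
    Matrix.nonsing_inv_mul_cancel_right _ _ hF, ← Matrix.mulVec_mulVec]
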